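/- Let V be a finite set, F : {0,1}^V → {0, 1, …, |V|} a generalized counting function, S ⊆ {0, 1, …, |V|} a 2-gap free set, and M = {α : F(α) ∈ S} nonempty. Fix α ∈ M, let U = {n : min S ≤ n ≤ max S and n ≡ F(α) (mod 2)}, and let M_α = {β ∈ {0,1}^V : F(β) ∈ U}. Then: (1) M_α is an even Δ-matroid; (2) M_α contains every β ∈ M whose number of ones has the same parity as that of α; and (3) every γ ∈ M_α ∖ M satisfies γ ⊕ v ∈ M for all v ∈ V. In particular, the sets M_α witness that M is coverable. -/

import Mathlib

/-- Flip the values of a Boolean tuple on a finite set of coordinates. -/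
def flipS {V : Type*} [DecidableEq V] (α : V → Bool) (S : Finset V) : V → Bool :=
  fun v => if v ∈ S then !(α v) else α v

/-- Flip the value of a Boolean tuple at a single coordinate. -/
def flip1 {V : Type*} [DecidableEq V] (α : V → Bool) (u : V) : V → Bool :=
  flipS α {u}

/-- `M` is a Δ-matroid. -/
def IsDeltaMatroid {V : Type*} [DecidableEq V] (M : Set (V → Bool)) : Prop :=
  M.Nonempty ∧ ∀ α ∈ M, ∀ β ∈ M, ∀ v, α v ≠ β v →
    ∃ u, α u ≠ β u ∧ flipS α {u, v} ∈ M

/-- Number of ones in a Boolean tuple. -/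
def numOnes {V : Type*} [Fintype V] (α : V → Bool) : ℕ :=
  (Finset.univ.filter fun v => α v = true).card

/-- `M` is an even Δ-matroid. -/
def IsEvenDeltaMatroid {V : Type*} [Fintype V] [DecidableEq V] (M : Set (V → Bool)) : Prop :=
  IsDeltaMatroid M ∧ ∀ α ∈ M, ∀ β ∈ M, numOnes α % 2 = numOnes β % 2

/-- `α` and `β` are even-neighbors with respect to `M`. -/
def EvenNeighbors {V : Type*} [DecidableEq V] (M : Set (V → Bool)) (α β : V → Bool) : Prop :=
  ∃ u v, u ≠ v ∧ β = flip1 (flip1 α u) v ∧ flip1 α u ∉ M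

/-- Reachability via chains of even-neighbors inside `M`. -/
def Reachable {V : Type*} [DecidableEq V] (M : Set (V → Bool)) :
    (V → Bool) → (V → Bool) → Prop :=
  Relation.ReflTransGen (fun x y => x ∈ M ∧ y ∈ M ∧ EvenNeighbors M x y)

/-- `M` is coverable. -/
def Coverable {V : Type*} [Fintype V] [DecidableEq V] (M : Set (V → Bool)) : Prop :=
  ∀ α ∈ M, ∃ Mα : Set (V → Bool),
    IsEvenDeltaMatroid Mα ∧
    (∀ β ∈ M, Reachable M α β → β ∈ Mα) ∧
    (∀ γ ∈ M, Reachable M α γ → ∀ u v,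
      flip1 (flip1 γ u) v ∈ Mα → flip1 (flip1 γ u) v ∉ M →
      flip1 γ u ∈ M ∧ flip1 γ v ∈ M)

/-- Direct product of two sets of tuples on disjoint ground sets. -/
def prodSet {U V : Type*} (M : Set (U → Bool)) (N : Set (V → Bool)) :
    Set (U ⊕ V → Bool) :=
  {h | (fun u => h (Sum.inl u)) ∈ M ∧ (fun v => h (Sum.inr v)) ∈ N}

/-- `M` is an even-zebra Δ-matroid. -/
def IsEvenZebra {V : Type*} [Fintype V] [DecidableEq V] (M : Set (V → Bool)) : Prop :=
  ∀ α ∈ M, ∃ Mα : Set (V → Bool),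
    IsEvenDeltaMatroid Mα ∧
    (∀ β ∈ M, numOnes β % 2 = numOnes α % 2 → β ∈ Mα) ∧
    (∀ β ∈ M, ∀ u v, flip1 (flip1 β u) v ∈ Mα → flip1 (flip1 β u) v ∉ M →
      flip1 β u ∈ M ∧ flip1 β v ∈ M)

/-- Identification of two variables of `M`. -/
def identify {U : Type*} [DecidableEq U] (M : Set (U → Bool)) (w₁ w₂ : U) :
    Set ({x : U // x ≠ w₁ ∧ x ≠ w₂} → Bool) :=
  {g | ∃ β ∈ M, β w₁ = β w₂ ∧ ∀ x : {x : U // x ≠ w₁ ∧ x ≠ w₂}, g x = β x.val}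


/-- `F` is a generalized counting function on `{0,1}^V`: it takes values in
`{0, …, |V|}`, changes by exactly `±1` under flipping a single coordinate, and whenever
`F α > F β` there are coordinates `u, v ∈ α △ β` with `F (α ⊕ u) = F α − 1` and
`F (β ⊕ v) = F β + 1`. -/
def IsGCFunction {V : Type*} [Fintype V] [DecidableEq V] (F : (V → Bool) → ℕ) : Prop :=
  (∀ α, F α ≤ Fintype.card V) ∧
  (∀ α (v : V), F (flip1 α v) = F α + 1 ∨ F (flip1 α v) + 1 = F α) ∧
  (∀ α β, F β < F α → ∃ u v, α u ≠ β u ∧ α v ≠ β v ∧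
    F (flip1 α u) + 1 = F α ∧ F (flip1 β v) = F β + 1)

/-- `S` is 2-gap free: any `x ∉ S` with `min S < x < max S` has both `x + 1 ∈ S` and
`x − 1 ∈ S`. -/
def TwoGapFree (S : Finset ℕ) : Prop :=
  ∀ x, x ∉ S → (∃ a ∈ S, a < x) → (∃ b ∈ S, x < b) → (x + 1 ∈ S ∧ x - 1 ∈ S)

/-
A gc-function changes by exactly one under every single flip, and so does the number of ones;
hence `F β + numOnes β` has constant parity, so the parity of `F` and the parity of the number
of ones determine each other. The band `M_α` of tuples whose `F`-value lies in `[min S, max S]`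
and has the parity of `F α` is an even Δ-matroid: flipping `v` in `β` moves `F` off the parity,
and the gc-exchange property supplies a second flip `u ∈ β △ γ` that moves it back, towards
`F γ`, so it stays within the band. A tuple of the band outside `M` has its value in a gap of
`S`, and since gaps are isolated, both neighbouring values (hence all single flips) lie in `M`.
Reachability only ever flips two coordinates, so it preserves parity and lands in the band.
-/

section Flips

variable {V : Type*} [DecidableEq V]

lemma flip1_apply (x : V → Bool) (a w : V) : flip1 x a w = if w = a then !x w else x w := by
  simp [flip1, flipS]

lemma flip1_flip1 (x : V → Bool) (a : V) : flip1 (flip1 x a) a = x := by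
  funext w; by_cases h : w = a <;> simp [flip1_apply, h]

lemma flip1_comm (x : V → Bool) (a b : V) : flip1 (flip1 x a) b = flip1 (flip1 x b) a := by
  funext w; by_cases ha : w = a <;> by_cases hb : w = b <;> simp_all [flip1_apply]

lemma flipS_pair (x : V → Bool) {u v : V} (h : u ≠ v) :
    flipS x {u, v} = flip1 (flip1 x v) u := by
  funext w; by_cases hu : w = u <;> by_cases hv : w = v <;> simp_all [flip1_apply, flipS]

@[simp]
lemma flipS_empty (x : V → Bool) : flipS x ∅ = x := by
  funext w; simp [flipS]

lemma flipS_insert (x : V → Bool) {a : V} {s : Finset V} (ha : a ∉ s) :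
    flipS x (insert a s) = flip1 (flipS x s) a := by
  funext w; by_cases h : w = a <;> simp_all [flip1_apply, flipS]

lemma eq_flipS_filter_ne [Fintype V] (x y : V → Bool) :
    y = flipS x (Finset.univ.filter fun w => x w ≠ y w) := by
  funext w; simp only [flipS, Finset.mem_filter, Finset.mem_univ, true_and]
  cases x w <;> cases y w <;> simp

end Flips

section Parity

variable {V : Type*} [DecidableEq V]

def ChangesByOne (G : (V → Bool) → ℕ) : Prop :=
  ∀ x u, G (flip1 x u) = G x + 1 ∨ G (flip1 x u) + 1 = G x

lemma changesByOne_numOnes [Fintype V] : ChangesByOne (numOnes (V := V)) := by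
  intro x u
  unfold numOnes
  set T := Finset.univ.filter fun v => x v = true
  by_cases h : x u = true
  · right
    have hu : u ∈ T := by simp [T, h]
    have hT : (Finset.univ.filter fun v => flip1 x u v = true) = T.erase u := by
      ext w; by_cases hw : w = u <;> simp_all [T, flip1_apply]
    rw [hT, Finset.card_erase_add_one hu]
  · left
    have hu : u ∉ T := by simp [T, h]
    have hT : (Finset.univ.filter fun v => flip1 x u v = true) = insert u T := by
      ext w; by_cases hw : w = u <;> simp_all [T, flip1_apply]
    rw [hT, Finset.card_insert_of_notMem hu]

namespace ChangesByOne

variable {G H : (V → Bool) → ℕ}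

lemma flip1_flip1_mod_two (hG : ChangesByOne G) (x : V → Bool) (u v : V) :
    G (flip1 (flip1 x u) v) % 2 = G x % 2 := by
  rcases hG x u with h | h <;> rcases hG (flip1 x u) v with h' | h' <;> omega

lemma flipS_mod_two (hG : ChangesByOne G) (x : V → Bool) (s : Finset V) :
    G (flipS x s) % 2 = (G x + s.card) % 2 := by
  induction s using Finset.induction_on with
  | empty => simp
  | insert a s ha ih =>
    rw [flipS_insert x ha, Finset.card_insert_of_notMem ha]
    rcases hG (flipS x s) a with h | h <;> omega

lemma add_mod_two_eq [Fintype V] (hG : ChangesByOne G) (hH : ChangesByOne H) (x y : V → Bool) :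
    (G x + H x) % 2 = (G y + H y) % 2 := by
  have hy := eq_flipS_filter_ne x y
  have hGy := hG.flipS_mod_two x (Finset.univ.filter fun w => x w ≠ y w)
  have hHy := hH.flipS_mod_two x (Finset.univ.filter fun w => x w ≠ y w)
  rw [← hy] at hGy hHy
  omega

lemma mod_two_eq_iff [Fintype V] (hG : ChangesByOne G) (x y : V → Bool) :
    G x % 2 = G y % 2 ↔ numOnes x % 2 = numOnes y % 2 := by
  have := hG.add_mod_two_eq changesByOne_numOnes x y
  omega

end ChangesByOne

lemma Reachable.numOnes_mod_two_eq [Fintype V] {M : Set (V → Bool)} {α β : V → Bool}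
    (h : Reachable M α β) : numOnes β % 2 = numOnes α % 2 := by
  induction h with
  | refl => rfl
  | tail _ hstep ih =>
    obtain ⟨-, -, u, v, -, rfl, -⟩ := hstep
    rw [changesByOne_numOnes.flip1_flip1_mod_two, ih]

lemma coverable_of_parity_covers [Fintype V] {M : Set (V → Bool)}
    (h : ∀ α ∈ M, ∃ Mα : Set (V → Bool), IsEvenDeltaMatroid Mα ∧
      (∀ β ∈ M, numOnes β % 2 = numOnes α % 2 → β ∈ Mα) ∧
      (∀ γ ∈ Mα, γ ∉ M → ∀ v, flip1 γ v ∈ M)) :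
    Coverable M := by
  intro α hα
  obtain ⟨Mα, hEven, hpar, hflip⟩ := h α hα
  refine ⟨Mα, hEven, fun β hβ hreach => hpar β hβ hreach.numOnes_mod_two_eq, ?_⟩
  intro γ _ _ u v hmem hnot
  have hv := hflip _ hmem hnot v
  have hu := hflip _ hmem hnot u
  rw [flip1_flip1] at hv
  rw [flip1_comm, flip1_flip1] at hu
  exact ⟨hv, hu⟩

end Parity

lemma TwoGapFree.mem_of_adjacent {S : Finset ℕ} (hgap : TwoGapFree S) (hS : S.Nonempty)
    {n m : ℕ} (hn : n ∉ S) (hmin : S.min' hS ≤ n) (hmax : n ≤ S.max' hS)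
    (hm : m = n + 1 ∨ m + 1 = n) : m ∈ S := by
  have hlt : S.min' hS < n := lt_of_le_of_ne hmin fun h => hn (h ▸ S.min'_mem hS)
  have hgt : n < S.max' hS := lt_of_le_of_ne hmax fun h => hn (h.symm ▸ S.max'_mem hS)
  obtain ⟨hsucc, hpred⟩ := hgap n hn ⟨_, S.min'_mem hS, hlt⟩ ⟨_, S.max'_mem hS, hgt⟩
  rcases hm with rfl | hm
  · exact hsucc
  · rwa [show m = n - 1 by omega]

def levelBand {V : Type*} (F : (V → Bool) → ℕ) (a b p : ℕ) : Set (V → Bool) :=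
  {β | a ≤ F β ∧ F β ≤ b ∧ F β % 2 = p}

namespace IsGCFunction

variable {V : Type*} [Fintype V] [DecidableEq V] {F : (V → Bool) → ℕ}

lemma changesByOne (hF : IsGCFunction F) : ChangesByOne F := hF.2.1

lemma exists_flip1_between (hF : IsGCFunction F) {x y : V → Bool} (hxy : F x ≠ F y) :
    ∃ u, x u ≠ y u ∧ min (F x) (F y) ≤ F (flip1 x u) ∧ F (flip1 x u) ≤ max (F x) (F y) := by
  rcases lt_or_gt_of_ne hxy with hlt | hgt
  · obtain ⟨-, u, -, hu, -, hFu⟩ := hF.2.2 y x hlt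
    exact ⟨u, Ne.symm hu, by omega, by omega⟩
  · obtain ⟨u, -, hu, -, hFu, -⟩ := hF.2.2 x y hgt
    exact ⟨u, hu, by omega, by omega⟩

lemma exchange_levelBand (hF : IsGCFunction F) {a b p : ℕ} {β γ : V → Bool}
    (hβ : β ∈ levelBand F a b p) (hγ : γ ∈ levelBand F a b p) {v : V} (hv : β v ≠ γ v) :
    ∃ u, β u ≠ γ u ∧ flipS β {u, v} ∈ levelBand F a b p := by
  obtain ⟨hβa, hβb, hβp⟩ := hβ
  obtain ⟨hγa, hγb, hγp⟩ := hγ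
  have hv' : flip1 β v v = γ v := by
    simp only [flip1_apply, if_true]; revert hv; cases β v <;> cases γ v <;> simp
  have hFv := hF.changesByOne β v
  obtain ⟨u, hu, hlo, hhi⟩ := hF.exists_flip1_between (x := flip1 β v) (y := γ) (by omega)
  have hFu := hF.changesByOne (flip1 β v) u
  have huv : u ≠ v := by rintro rfl; exact hu hv'
  refine ⟨u, by simpa [flip1_apply, huv] using hu, ?_⟩
  rw [flipS_pair β huv]
  refine ⟨?_, ?_, ?_⟩ <;> omega

lemma isEvenDeltaMatroid_levelBand (hF : IsGCFunction F) {a b p : ℕ} {α : V → Bool}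
    (hα : α ∈ levelBand F a b p) : IsEvenDeltaMatroid (levelBand F a b p) := by
  refine ⟨⟨⟨α, hα⟩, fun β hβ γ hγ v hv => hF.exchange_levelBand hβ hγ hv⟩, ?_⟩
  intro β hβ γ hγ
  exact (hF.changesByOne.mod_two_eq_iff β γ).1 (hβ.2.2.trans hγ.2.2.symm)

lemma levelBand_parity_cover (hF : IsGCFunction F) {S : Finset ℕ} (hgap : TwoGapFree S)
    (hS : S.Nonempty) {α : V → Bool} (hα : F α ∈ S) :
    IsEvenDeltaMatroid (levelBand F (S.min' hS) (S.max' hS) (F α % 2)) ∧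
    (∀ β, F β ∈ S → numOnes β % 2 = numOnes α % 2 →
      β ∈ levelBand F (S.min' hS) (S.max' hS) (F α % 2)) ∧
    (∀ γ ∈ levelBand F (S.min' hS) (S.max' hS) (F α % 2), F γ ∉ S → ∀ v, F (flip1 γ v) ∈ S) := by
  refine ⟨hF.isEvenDeltaMatroid_levelBand (α := α) ⟨S.min'_le _ hα, S.le_max' _ hα, rfl⟩,
    fun β hβ hpar => ?_, fun γ hγ hγS v => ?_⟩
  · exact ⟨S.min'_le _ hβ, S.le_max' _ hβ, (hF.changesByOne.mod_two_eq_iff β α).2 hpar⟩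
  · exact hgap.mem_of_adjacent hS hγS hγ.1 hγ.2.1 (hF.changesByOne γ v)

end IsGCFunction

theorem compactLike_cover_general {V : Type} [Fintype V] [DecidableEq V]
    (F : (V → Bool) → ℕ) (S : Finset ℕ)
    (hF : IsGCFunction F) (hgap : TwoGapFree S)
    (hS : S.Nonempty)
    (M : Set (V → Bool)) (hM : M = {α | F α ∈ S})
    (α : V → Bool) (hα : α ∈ M)
    (Mα : Set (V → Bool))
    (hMα : Mα = {β | S.min' hS ≤ F β ∧ F β ≤ S.max' hS ∧ F β % 2 = F α % 2}) :
    IsEvenDeltaMatroid Mα ∧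
    (∀ β ∈ M, numOnes β % 2 = numOnes α % 2 → β ∈ Mα) ∧
    (∀ γ ∈ Mα, γ ∉ M → ∀ v, flip1 γ v ∈ M) ∧
    Coverable M := by
  subst hM hMα
  have cover := fun α' (hα' : α' ∈ {α | F α ∈ S}) => hF.levelBand_parity_cover hgap hS hα'
  obtain ⟨hEven, hpar, hflip⟩ := cover α hα
  exact ⟨hEven, hpar, hflip, coverable_of_parity_covers fun α' hα' => ⟨_, cover α' hα'⟩⟩

/-- For a compact-like Δ-matroid `M = {α : F α ∈ S}`, fixing `α ∈ M` and letting
`M_α = {β : F β ∈ U}` where `U = {n : min S ≤ n ≤ max S, n ≡ F α (mod 2)}`: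
(1) `M_α` is an even Δ-matroid; (2) `M_α` contains every `β ∈ M` whose number of ones
has the same parity as that of `α`; (3) every `γ ∈ M_α ∖ M` satisfies `γ ⊕ v ∈ M` for
all `v`.  In particular, `M` is coverable. -/
theorem compactLike_cover {V : Type} [Fintype V] [DecidableEq V]
    (F : (V → Bool) → ℕ) (S : Finset ℕ)
    (hF : IsGCFunction F) (hSsub : ∀ s ∈ S, s ≤ Fintype.card V) (hgap : TwoGapFree S)
    (hS : S.Nonempty)
    (M : Set (V → Bool)) (hM : M = {α | F α ∈ S}) (hne : M.Nonempty)
    (α : V → Bool) (hα : α ∈ M)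
    (Mα : Set (V → Bool))
    (hMα : Mα = {β | S.min' hS ≤ F β ∧ F β ≤ S.max' hS ∧ F β % 2 = F α % 2}) :
    IsEvenDeltaMatroid Mα ∧
    (∀ β ∈ M, numOnes β % 2 = numOnes α % 2 → β ∈ Mα) ∧
    (∀ γ ∈ Mα, γ ∉ M → ∀ v, flip1 γ v ∈ M) ∧
    Coverable M :=
  compactLike_cover_general F S hF hgap hS M hM α hα Mα hMα
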